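/- arXiv:2305.01442 — 2 statements merged into one kernel-verified Lean document; each statement's English description precedes it below -/
import Mathlib

section
/- Let p be a prime, q a positive integer divisible by p, m ≥ 3, 0 ≤ δ < m, and let the functions a^t_σ be defined as in the stated construction. Let t₁, t₂ ∈ {0,…,p^{k+δ}−1} and let r, s ∈ {0,…,p^m−1} have p-ary digits (r_1,…,r_m) and (s_1,…,s_m) such that r_{π_β(1)} ≠ s_{π_β(1)} for some β ∈ {1,…,k}. Then Σ_{σ=0}^{p^k−1} ω_q^{a^{t₁}_{σ,r} − a^{t₂}_{σ,s}} = 0. -/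
/-!
Write `c_β = (q/p)(r_{π_β(1)} - s_{π_β(1)})`. The exponent `a^{t₁}_{σ,r} - a^{t₂}_{σ,s}` is a
constant plus `Σ_β σ_β c_β`, and `σ ↦ (σ_1, …, σ_k)` is a bijection from `{0, …, p^k - 1}` onto all
digit vectors, so the sum factors as a constant times `∏_β Σ_{x<p} (ω_q^{c_β})^x`. For the `β`
where the digits differ, `c_β ≠ 0` while `p c_β = 0` in `ℤ_q`, so `ω_q^{c_β}` is a `p`-th root of
unity other than `1` and its geometric sum vanishes.
-/

open Finset

/-- `i`-th (1-based) base-`p` digit of `r`, i.e. `r_i` where `r = Σ_i r_i p^(i-1)`. -/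
def dig (p r i : ℕ) : ℕ := r / p ^ (i - 1) % p

/-- `ω_q^x = exp(2π√-1·x/q)` for `x ∈ ℤ_q`. -/
noncomputable def eomega (q : ℕ) (x : ZMod q) : ℂ :=
  Complex.exp (2 * Real.pi * Complex.I * (x.val : ℂ) / (q : ℂ))

/-- Aperiodic cross-correlation of two length-`N` `ℤ_q`-valued sequences at integer shift `τ`. -/
noncomputable def ccorr (q N : ℕ) (u v : ℕ → ZMod q) (τ : ℤ) : ℂ :=
  if 0 ≤ τ then ∑ i ∈ Finset.range (N - τ.toNat), eomega q (u i - v (i + τ.toNat))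
  else ∑ i ∈ Finset.range (N - (-τ).toNat), eomega q (u (i + (-τ).toNat) - v i)

/-- Aperiodic autocorrelation. -/
noncomputable def acorr (q N : ℕ) (u : ℕ → ZMod q) (τ : ℤ) : ℂ := ccorr q N u u τ

/-- Entry `a^t_{σ,r}` of the construction: with `(r_1,…,r_m)` the `p`-ary digits of `r`,
`a^t_σ(r) = (q/p) Σ_β Σ_γ r_{π_β(γ)} r_{π_β(γ+1)} + Σ_l λ_l r_l + λ_0
 + (q/p)(Σ_β σ_β r_{π_β(1)} + Σ_β t_β r_{π_β(m_β)} + Σ_β t_{k+β} r_{m-δ+β})`. -/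
def aseq (p q m δ k : ℕ) (mcard : ℕ → ℕ) (pmap : ℕ → ℕ → ℕ) (lam : ℕ → ZMod q)
    (t σ r : ℕ) : ZMod q :=
  (((q / p) * ∑ β ∈ Finset.Icc 1 k, ∑ γ ∈ Finset.Icc 1 (mcard β - 1),
      dig p r (pmap β γ) * dig p r (pmap β (γ + 1)) : ℕ) : ZMod q)
  + ∑ l ∈ Finset.Icc 1 m, lam l * (dig p r l : ZMod q) + lam 0
  + (((q / p) * (∑ β ∈ Finset.Icc 1 k, dig p σ β * dig p r (pmap β 1)
      + ∑ β ∈ Finset.Icc 1 k, dig p t β * dig p r (pmap β (mcard β))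
      + ∑ β ∈ Finset.Icc 1 δ, dig p t (k + β) * dig p r (m - δ + β)) : ℕ) : ZMod q)

lemma AddChar.map_sum_eq_prod {ι A M : Type*} [AddCommMonoid A] [CommMonoid M]
    (ψ : AddChar A M) (s : Finset ι) (f : ι → A) :
    ψ (∑ i ∈ s, f i) = ∏ i ∈ s, ψ (f i) :=
  map_prod ψ.toMonoidHom (fun i => Multiplicative.ofAdd (f i)) s

lemma eomega_eq_stdAddChar (q : ℕ) [NeZero q] (x : ZMod q) :
    eomega q x = ZMod.stdAddChar x := by
  rw [ZMod.stdAddChar_apply, ZMod.toCircle_apply, eomega]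

lemma dig_finFunctionFinEquiv {p k : ℕ} (g : Fin k → Fin p) (i : Fin k) :
    dig p (finFunctionFinEquiv g) (i + 1) = g i := by
  rw [dig, Nat.add_sub_cancel, ← finFunctionFinEquiv_symm_apply_val, Equiv.symm_apply_apply]

lemma sum_range_pow_prod_dig_eq_prod_sum {R : Type*} [CommSemiring R] (p k : ℕ) (f : ℕ → ℕ → R) :
    ∑ σ ∈ range (p ^ k), ∏ β ∈ Icc 1 k, f β (dig p σ β) =
      ∏ β ∈ Icc 1 k, ∑ x ∈ range p, f β x := by
  have hIcc : ∀ g : ℕ → R, ∏ β ∈ Icc 1 k, g β = ∏ i : Fin k, g (i + 1) := fun g => by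
    rw [← Ico_add_one_right_eq_Icc, prod_Ico_eq_prod_range, Nat.add_sub_cancel,
      ← Fin.prod_univ_eq_prod_range]
    simp_rw [add_comm 1]
  simp_rw [hIcc, ← Fin.sum_univ_eq_sum_range, Finset.prod_univ_sum, Fintype.piFinset_univ]
  rw [← (finFunctionFinEquiv (m := p) (n := k)).sum_comp]
  simp_rw [dig_finFunctionFinEquiv]

lemma aseq_eq_aseq_zero_add (p q m δ k : ℕ) (mcard : ℕ → ℕ) (pmap : ℕ → ℕ → ℕ)
    (lam : ℕ → ZMod q) (t σ r : ℕ) :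
    aseq p q m δ k mcard pmap lam t σ r = aseq p q m δ k mcard pmap lam t 0 r +
      ∑ β ∈ Icc 1 k, dig p σ β • ((q / p : ℕ) * (dig p r (pmap β 1) : ZMod q)) := by
  have hdig : ∀ i, dig p 0 i = 0 := fun i => by simp [dig]
  simp only [aseq, hdig, zero_mul, sum_const_zero, zero_add, nsmul_eq_mul]
  push_cast
  simp_rw [mul_left_comm _ ((q / p : ℕ) : ZMod q), ← mul_sum]
  ring

lemma aseq_sub_aseq (p q m δ k : ℕ) (mcard : ℕ → ℕ) (pmap : ℕ → ℕ → ℕ)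
    (lam : ℕ → ZMod q) (t₁ t₂ σ r s : ℕ) :
    aseq p q m δ k mcard pmap lam t₁ σ r - aseq p q m δ k mcard pmap lam t₂ σ s =
      (aseq p q m δ k mcard pmap lam t₁ 0 r - aseq p q m δ k mcard pmap lam t₂ 0 s) +
      ∑ β ∈ Icc 1 k,
        dig p σ β • ((q / p : ℕ) * ((dig p r (pmap β 1) : ZMod q) - dig p s (pmap β 1))) := by
  rw [aseq_eq_aseq_zero_add _ _ _ _ _ _ _ _ t₁, aseq_eq_aseq_zero_add _ _ _ _ _ _ _ _ t₂]
  simp_rw [mul_sub, smul_sub, sum_sub_distrib]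
  abel

lemma natCast_div_mul_sub_eq_zero_iff {p q a b : ℕ} (hq : 0 < q) (hpq : p ∣ q) (ha : a < p)
    (hb : b < p) : ((q / p : ℕ) : ZMod q) * ((a : ZMod q) - b) = 0 ↔ a = b := by
  obtain ⟨d, rfl⟩ := hpq
  have hd : (d : ℤ) ≠ 0 := by exact_mod_cast right_ne_zero_of_mul hq.ne'
  rw [Nat.mul_div_cancel_left d (by omega), ← Int.cast_natCast d, ← Int.cast_natCast a,
    ← Int.cast_natCast b, ← Int.cast_sub, ← Int.cast_mul, ZMod.intCast_zmod_eq_zero_iff_dvd,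
    Nat.cast_mul, mul_comm (p : ℤ), mul_dvd_mul_iff_left hd]
  constructor
  · intro h
    have := Int.eq_zero_of_abs_lt_dvd h (by rw [abs_sub_lt_iff]; omega)
    omega
  · rintro rfl
    simp

lemma AddChar.geom_sum_eq_zero_of_nsmul_eq_zero {A K : Type*} [AddCommGroup A] [Field K]
    {ψ : AddChar A K} (hψ : Function.Injective ψ) {a : A} (ha : a ≠ 0) {n : ℕ}
    (hn : n • a = 0) : ∑ x ∈ range n, ψ a ^ x = 0 := by
  have hψa : ψ a ≠ 1 := by
    rwa [← ψ.map_zero_eq_one, hψ.ne_iff]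
  rw [geom_sum_eq hψa, ← ψ.map_nsmul_eq_pow, hn, ψ.map_zero_eq_one, sub_self, zero_div]

theorem szccs_case_one_sum_zero_general
    (p q m δ k : ℕ) (hq : 0 < q) (hpq : p ∣ q)
    (mcard : ℕ → ℕ) (pmap : ℕ → ℕ → ℕ) (lam : ℕ → ZMod q)
    (t₁ t₂ : ℕ)
    (r s : ℕ)
    (hdiff : ∃ β ∈ Finset.Icc 1 k, dig p r (pmap β 1) ≠ dig p s (pmap β 1)) :
    ∑ σ ∈ Finset.range (p ^ k),
      eomega q (aseq p q m δ k mcard pmap lam t₁ σ r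
        - aseq p q m δ k mcard pmap lam t₂ σ s) = 0 := by
  have : NeZero q := ⟨hq.ne'⟩
  obtain ⟨β₀, hβ₀, hne⟩ := hdiff
  set c : ℕ → ZMod q := fun β =>
    ((q / p : ℕ) : ZMod q) * ((dig p r (pmap β 1) : ZMod q) - dig p s (pmap β 1))
  have hsummand : ∀ σ, eomega q (aseq p q m δ k mcard pmap lam t₁ σ r
      - aseq p q m δ k mcard pmap lam t₂ σ s) =
      eomega q (aseq p q m δ k mcard pmap lam t₁ 0 r - aseq p q m δ k mcard pmap lam t₂ 0 s) *
        ∏ β ∈ Icc 1 k, ZMod.stdAddChar (c β) ^ dig p σ β := by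
    intro σ
    rw [aseq_sub_aseq, eomega_eq_stdAddChar, eomega_eq_stdAddChar, AddChar.map_add_eq_mul,
      AddChar.map_sum_eq_prod]
    simp_rw [AddChar.map_nsmul_eq_pow]
    rfl
  have hp : 0 < p := Nat.pos_of_dvd_of_pos hpq hq
  have hc : c β₀ ≠ 0 :=
    (natCast_div_mul_sub_eq_zero_iff hq hpq (Nat.mod_lt _ hp) (Nat.mod_lt _ hp)).not.mpr hne
  have hpc : p • c β₀ = 0 := by
    rw [← smul_mul_assoc, nsmul_eq_mul, ← Nat.cast_mul, Nat.mul_div_cancel' hpq,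
      ZMod.natCast_self, zero_mul]
  rw [sum_congr rfl fun σ _ => hsummand σ, ← mul_sum,
    sum_range_pow_prod_dig_eq_prod_sum p k fun β x => ZMod.stdAddChar (c β) ^ x,
    prod_eq_zero hβ₀ (AddChar.geom_sum_eq_zero_of_nsmul_eq_zero ZMod.injective_stdAddChar hc hpc),
    mul_zero]

/-- if the `p`-ary digits of `r` and `s` differ in position `π_β(1)`
for some `β ∈ {1,…,k}`, then `Σ_{σ=0}^{p^k-1} ω_q^{a^{t₁}_{σ,r} - a^{t₂}_{σ,s}} = 0`. -/
theorem szccs_case_one_sum_zero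
    (p q m δ k : ℕ) (hp : p.Prime) (hq : 0 < q) (hpq : p ∣ q)
    (hm : 3 ≤ m) (hδ : δ < m) (hk1 : 1 ≤ k) (hk2 : k ≤ m - δ)
    (mcard : ℕ → ℕ) (pmap : ℕ → ℕ → ℕ) (lam : ℕ → ZMod q)
    (hmcard : ∀ β ∈ Finset.Icc 1 k, 1 ≤ mcard β)
    (hmaps : ∀ β ∈ Finset.Icc 1 k, ∀ γ ∈ Finset.Icc 1 (mcard β),
      pmap β γ ∈ Finset.Icc 1 (m - δ))
    (hpart : ∀ l ∈ Finset.Icc 1 (m - δ), ∃! bg : ℕ × ℕ,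
      bg.1 ∈ Finset.Icc 1 k ∧ bg.2 ∈ Finset.Icc 1 (mcard bg.1) ∧ pmap bg.1 bg.2 = l)
    (t₁ t₂ : ℕ) (ht₁ : t₁ < p ^ (k + δ)) (ht₂ : t₂ < p ^ (k + δ))
    (r s : ℕ) (hr : r < p ^ m) (hs : s < p ^ m)
    (hdiff : ∃ β ∈ Finset.Icc 1 k, dig p r (pmap β 1) ≠ dig p s (pmap β 1)) :
    ∑ σ ∈ Finset.range (p ^ k),
      eomega q (aseq p q m δ k mcard pmap lam t₁ σ r
        - aseq p q m δ k mcard pmap lam t₂ σ s) = 0 :=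
  szccs_case_one_sum_zero_general p q m δ k hq hpq mcard pmap lam t₁ t₂ r s hdiff
end

section
/- Let p be a prime, q a positive integer divisible by p, m ≥ 3, 0 ≤ δ < m, and let the functions a^t_σ be defined as in the stated construction. Fix t ∈ {0,…,p^{k+δ}−1}, σ ∈ {0,…,p^k−1}, β ∈ {1,…,k}, and γ with 3 ≤ γ ≤ m_β. Let r ∈ {0,…,p^m−1} have p-ary digits (r_1,…,r_m), and for 1 ≤ j ≤ p−1 let r^j be the integer whose p-ary digits agree with those of r except that the digit in position π_β(γ−1) is (r_{π_β(γ−1)} − j) mod p. Then, with d denoting the integer difference r_{π_β(γ−1)} − r^j_{π_β(γ−1)} of the two digits, the following holds in ℤ_q: a^t_{σ,r} − a^t_{σ,r^j} = d · ((q/p)·r_{π_β(γ−2)} + (q/p)·r_{π_β(γ)} + λ_{π_β(γ−1)}). -/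
open Finset

/-!
As a function of the digit vector, `a^t_σ` is a quadratic form whose only quadratic terms are
the products of consecutive digits along the chains `π_β`. For `3 ≤ γ ≤ m_β` the position
`π_β(γ-1)` is an interior vertex of the chain `π_β` (it is neither `π_β(1)`, nor `π_β(m_β)`, nor
one of the last `δ` positions, and by the partition property it lies on no other chain), so
changing that single digit only moves the two chain products through it and the linear term
`λ_{π_β(γ-1)} r_{π_β(γ-1)}`.
-/

def chainSum {R : Type*} [Mul R] [AddCommMonoid R] (k : ℕ) (mcard : ℕ → ℕ) (pmap : ℕ → ℕ → ℕ)
    (x : ℕ → R) : R :=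
  ∑ β ∈ Icc 1 k, ∑ γ ∈ Icc 1 (mcard β - 1), x (pmap β γ) * x (pmap β (γ + 1))

theorem Finset.sum_sub_sum_eq_single {ι M : Type*} [AddCommGroup M] {s : Finset ι}
    {f g : ι → M} {a : ι} (ha : a ∈ s) (hfg : ∀ i ∈ s, i ≠ a → f i = g i) :
    ∑ i ∈ s, f i - ∑ i ∈ s, g i = f a - g a := by
  rw [← sum_sub_distrib, sum_eq_single_of_mem a ha]
  intro i hi hne
  rw [hfg i hi hne, sub_self]

section Chain

variable {R : Type*} [CommRing R]

theorem pathSum_sub_pathSum {f g : ℕ → R} {n c : ℕ} (hc : 2 ≤ c) (hcn : c + 1 ≤ n)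
    (hfg : ∀ i ∈ Icc 1 n, i ≠ c → f i = g i) :
    ∑ i ∈ Icc 1 (n - 1), f i * f (i + 1) - ∑ i ∈ Icc 1 (n - 1), g i * g (i + 1)
      = (f c - g c) * (f (c - 1) + f (c + 1)) := by
  have hc1 : c - 1 + 1 = c := by omega
  have hprev : f (c - 1) = g (c - 1) := hfg _ (mem_Icc.2 ⟨by omega, by omega⟩) (by omega)
  have hnext : f (c + 1) = g (c + 1) := hfg _ (mem_Icc.2 ⟨by omega, by omega⟩) (by omega)
  rw [← sum_sub_distrib, sum_eq_add_of_mem (c - 1) c (mem_Icc.2 ⟨by omega, by omega⟩)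
    (mem_Icc.2 ⟨by omega, by omega⟩) (by omega)]
  · rw [hc1, hprev, hnext]
    ring
  · rintro i hi ⟨hne_prev, hne⟩
    obtain ⟨hi1, hin⟩ := mem_Icc.1 hi
    rw [hfg i (mem_Icc.2 ⟨hi1, by omega⟩) hne,
      hfg (i + 1) (mem_Icc.2 ⟨by omega, by omega⟩) (by omega), sub_self]

theorem chainSum_sub_chainSum {k : ℕ} {mcard : ℕ → ℕ} {pmap : ℕ → ℕ → ℕ} {x y : ℕ → R}
    {β₀ c : ℕ} (hβ₀ : β₀ ∈ Icc 1 k) (hc : 2 ≤ c) (hcn : c + 1 ≤ mcard β₀)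
    (hxy : ∀ β ∈ Icc 1 k, ∀ γ ∈ Icc 1 (mcard β), (β, γ) ≠ (β₀, c) →
      x (pmap β γ) = y (pmap β γ)) :
    chainSum k mcard pmap x - chainSum k mcard pmap y
      = (x (pmap β₀ c) - y (pmap β₀ c))
        * (x (pmap β₀ (c - 1)) + x (pmap β₀ (c + 1))) := by
  unfold chainSum
  rw [sum_sub_sum_eq_single hβ₀]
  · exact pathSum_sub_pathSum (f := fun γ => x (pmap β₀ γ)) hc hcn
      fun γ hγ hne => hxy β₀ hβ₀ γ hγ (by simp [hne])
  · intro β hβ hne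
    refine sum_congr rfl fun γ hγ => ?_
    obtain ⟨hγ1, hγn⟩ := mem_Icc.1 hγ
    rw [hxy β hβ γ (mem_Icc.2 ⟨hγ1, by omega⟩) (by simp [hne]),
      hxy β hβ (γ + 1) (mem_Icc.2 ⟨by omega, by omega⟩) (by simp [hne])]

end Chain

theorem eq_of_pmap_eq {n k : ℕ} {mcard : ℕ → ℕ} {pmap : ℕ → ℕ → ℕ}
    (hmaps : ∀ β ∈ Icc 1 k, ∀ γ ∈ Icc 1 (mcard β), pmap β γ ∈ Icc 1 n)
    (hpart : ∀ l ∈ Icc 1 n, ∃! bg : ℕ × ℕ,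
      bg.1 ∈ Icc 1 k ∧ bg.2 ∈ Icc 1 (mcard bg.1) ∧ pmap bg.1 bg.2 = l)
    {β γ β' γ' : ℕ} (hβ : β ∈ Icc 1 k) (hγ : γ ∈ Icc 1 (mcard β))
    (hβ' : β' ∈ Icc 1 k) (hγ' : γ' ∈ Icc 1 (mcard β'))
    (h : pmap β' γ' = pmap β γ) : (β', γ') = (β, γ) :=
  (hpart _ (hmaps β hβ γ hγ)).unique ⟨hβ', hγ', h⟩ ⟨hβ, hγ, rfl⟩

theorem aseq_sub_aseq_of_dig_eq {p q m δ k : ℕ} {mcard : ℕ → ℕ} {pmap : ℕ → ℕ → ℕ}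
    (lam : ℕ → ZMod q) (t σ : ℕ) {β c r r' : ℕ}
    (hmcard : ∀ b ∈ Icc 1 k, 1 ≤ mcard b)
    (hmaps : ∀ b ∈ Icc 1 k, ∀ d ∈ Icc 1 (mcard b), pmap b d ∈ Icc 1 (m - δ))
    (hpart : ∀ l ∈ Icc 1 (m - δ), ∃! bg : ℕ × ℕ,
      bg.1 ∈ Icc 1 k ∧ bg.2 ∈ Icc 1 (mcard bg.1) ∧ pmap bg.1 bg.2 = l)
    (hβ : β ∈ Icc 1 k) (hc : 2 ≤ c) (hcn : c + 1 ≤ mcard β)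
    (hdig : ∀ i ∈ Icc 1 m, i ≠ pmap β c → dig p r' i = dig p r i) :
    aseq p q m δ k mcard pmap lam t σ r - aseq p q m δ k mcard pmap lam t σ r'
      = ((dig p r (pmap β c) : ZMod q) - dig p r' (pmap β c))
        * (((q / p : ℕ) : ZMod q) * dig p r (pmap β (c - 1))
          + ((q / p : ℕ) : ZMod q) * dig p r (pmap β (c + 1)) + lam (pmap β c)) := by
  have hc_mem : c ∈ Icc 1 (mcard β) := mem_Icc.2 ⟨by omega, by omega⟩
  have hcδ : pmap β c ∈ Icc 1 (m - δ) := hmaps β hβ c hc_mem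
  have hcm : pmap β c ∈ Icc 1 m := Icc_subset_Icc_right (by omega) hcδ
  have hchain_dig : ∀ b ∈ Icc 1 k, ∀ d ∈ Icc 1 (mcard b), (b, d) ≠ (β, c) →
      dig p r' (pmap b d) = dig p r (pmap b d) := fun b hb d hd hne =>
    hdig _ (Icc_subset_Icc_right (by omega) (hmaps b hb d hd))
      fun h => hne (eq_of_pmap_eq hmaps hpart hβ hc_mem hb hd h)
  have hchain := chainSum_sub_chainSum (k := k) (mcard := mcard) (pmap := pmap)
    (x := fun i => (dig p r i : ZMod q)) (y := fun i => (dig p r' i : ZMod q))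
    hβ hc hcn fun b hb d hd hne => by simp only [hchain_dig b hb d hd hne]
  have hlin := sum_sub_sum_eq_single (f := fun l => lam l * (dig p r l : ZMod q))
    (g := fun l => lam l * (dig p r' l : ZMod q)) hcm
    fun l hl hne => by simp only [hdig l hl hne]
  have hfirst : ∀ b ∈ Icc 1 k,
      dig p σ b * dig p r' (pmap b 1) = dig p σ b * dig p r (pmap b 1) := fun b hb => by
    have hne : (b, 1) ≠ (β, c) := by simp only [ne_eq, Prod.mk.injEq]; omega
    rw [hchain_dig b hb 1 (mem_Icc.2 ⟨le_rfl, hmcard b hb⟩) hne]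
  have hlast : ∀ b ∈ Icc 1 k, dig p t b * dig p r' (pmap b (mcard b))
      = dig p t b * dig p r (pmap b (mcard b)) := fun b hb => by
    rw [hchain_dig b hb _ (mem_Icc.2 ⟨hmcard b hb, le_rfl⟩) (fun h => by
      obtain ⟨rfl, h⟩ := Prod.mk.inj h; omega)]
  have htail : ∀ b ∈ Icc 1 δ, dig p t (k + b) * dig p r' (m - δ + b)
      = dig p t (k + b) * dig p r (m - δ + b) := fun b hb => by
    rw [mem_Icc] at hb hcδ
    rw [hdig _ (mem_Icc.2 ⟨by omega, by omega⟩) (by omega)]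
  unfold aseq
  rw [sum_congr rfl hfirst, sum_congr rfl hlast, sum_congr rfl htail]
  unfold chainSum at hchain
  push_cast
  linear_combination ((q / p : ℕ) : ZMod q) * hchain + hlin

theorem szccs_digit_shift_difference_general
    (p q m δ k : ℕ)
    (mcard : ℕ → ℕ) (pmap : ℕ → ℕ → ℕ) (lam : ℕ → ZMod q)
    (hmcard : ∀ β ∈ Finset.Icc 1 k, 1 ≤ mcard β)
    (hmaps : ∀ β ∈ Finset.Icc 1 k, ∀ γ ∈ Finset.Icc 1 (mcard β),
      pmap β γ ∈ Finset.Icc 1 (m - δ))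
    (hpart : ∀ l ∈ Finset.Icc 1 (m - δ), ∃! bg : ℕ × ℕ,
      bg.1 ∈ Finset.Icc 1 k ∧ bg.2 ∈ Finset.Icc 1 (mcard bg.1) ∧ pmap bg.1 bg.2 = l)
    (t : ℕ) (σ : ℕ)
    (β : ℕ) (hβ : β ∈ Finset.Icc 1 k)
    (γ : ℕ) (hγ : 3 ≤ γ ∧ γ ≤ mcard β)
    (r : ℕ)
    (r' : ℕ → ℕ)
    (hr' : ∀ j ∈ Finset.Icc 1 (p - 1), r' j < p ^ m ∧
      ∀ i ∈ Finset.Icc 1 m, dig p (r' j) i =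
        if i = pmap β (γ - 1) then (dig p r i + p - j) % p else dig p r i) :
    ∀ j ∈ Finset.Icc 1 (p - 1),
      aseq p q m δ k mcard pmap lam t σ r - aseq p q m δ k mcard pmap lam t σ (r' j)
        = (((dig p r (pmap β (γ - 1)) : ℤ)
              - (dig p (r' j) (pmap β (γ - 1)) : ℤ) : ℤ) : ZMod q)
          * ((((q / p) * dig p r (pmap β (γ - 2)) : ℕ) : ZMod q)
              + (((q / p) * dig p r (pmap β γ) : ℕ) : ZMod q)
              + lam (pmap β (γ - 1))) := by
  intro j hj
  obtain ⟨hγ3, hγm⟩ := hγ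
  have h := aseq_sub_aseq_of_dig_eq lam t σ (r := r) (r' := r' j) (c := γ - 1) hmcard hmaps
    hpart hβ (by omega) (by omega) fun i hi hne => by rw [(hr' j hj).2 i hi, if_neg hne]
  rw [show γ - 1 - 1 = γ - 2 by omega, show γ - 1 + 1 = γ by omega] at h
  push_cast
  exact h

/-- for `3 ≤ γ ≤ m_β`, if `r^j` agrees with `r` in all digit positions
except `π_β(γ-1)`, where the digit is `(r_{π_β(γ-1)} - j) mod p`, then with
`d = r_{π_β(γ-1)} - r^j_{π_β(γ-1)}` (integer difference of the two digits) one has, in `ℤ_q`,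
`a^t_{σ,r} - a^t_{σ,r^j} = d·((q/p)r_{π_β(γ-2)} + (q/p)r_{π_β(γ)} + λ_{π_β(γ-1)})`. -/
theorem szccs_digit_shift_difference
    (p q m δ k : ℕ) (hp : p.Prime) (hq : 0 < q) (hpq : p ∣ q)
    (hm : 3 ≤ m) (hδ : δ < m) (hk1 : 1 ≤ k) (hk2 : k ≤ m - δ)
    (mcard : ℕ → ℕ) (pmap : ℕ → ℕ → ℕ) (lam : ℕ → ZMod q)
    (hmcard : ∀ β ∈ Finset.Icc 1 k, 1 ≤ mcard β)
    (hmaps : ∀ β ∈ Finset.Icc 1 k, ∀ γ ∈ Finset.Icc 1 (mcard β),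
      pmap β γ ∈ Finset.Icc 1 (m - δ))
    (hpart : ∀ l ∈ Finset.Icc 1 (m - δ), ∃! bg : ℕ × ℕ,
      bg.1 ∈ Finset.Icc 1 k ∧ bg.2 ∈ Finset.Icc 1 (mcard bg.1) ∧ pmap bg.1 bg.2 = l)
    (t : ℕ) (ht : t < p ^ (k + δ)) (σ : ℕ) (hσ : σ < p ^ k)
    (β : ℕ) (hβ : β ∈ Finset.Icc 1 k)
    (γ : ℕ) (hγ : 3 ≤ γ ∧ γ ≤ mcard β)
    (r : ℕ) (hr : r < p ^ m)
    (r' : ℕ → ℕ)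
    (hr' : ∀ j ∈ Finset.Icc 1 (p - 1), r' j < p ^ m ∧
      ∀ i ∈ Finset.Icc 1 m, dig p (r' j) i =
        if i = pmap β (γ - 1) then (dig p r i + p - j) % p else dig p r i) :
    ∀ j ∈ Finset.Icc 1 (p - 1),
      aseq p q m δ k mcard pmap lam t σ r - aseq p q m δ k mcard pmap lam t σ (r' j)
        = (((dig p r (pmap β (γ - 1)) : ℤ)
              - (dig p (r' j) (pmap β (γ - 1)) : ℤ) : ℤ) : ZMod q)
          * ((((q / p) * dig p r (pmap β (γ - 2)) : ℕ) : ZMod q)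
              + (((q / p) * dig p r (pmap β γ) : ℕ) : ZMod q)
              + lam (pmap β (γ - 1))) :=
  szccs_digit_shift_difference_general p q m δ k mcard pmap lam hmcard hmaps hpart t σ β hβ γ hγ r
    r' hr'
end
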